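/- arXiv:2209.09314 — 6 statements merged into one kernel-verified Lean document; each statement's English description precedes it below -/
import Mathlib

section
/- Let V be a Banach space, V_n ⊆ V a subset, and ℓ : V → ℝ^m a map. Suppose there exist constants α, μ > 0 and a norm ‖·‖_Z on ℝ^m such that ‖ℓ(v)−ℓ(w)‖_Z ≤ α‖v−w‖_V for all v,w ∈ V, and ‖v−w‖_V ≤ μ‖ℓ(v)−ℓ(w)‖_Z for all v,w ∈ V_n. Let u ∈ V, η ∈ ℝ^m, z = ℓ(u)+η, and let ũ ∈ V_n minimize v ↦ ‖z−ℓ(v)‖_Z over V_n. Then ‖u−ũ‖_V ≤ (1+2αμ)·inf_{v∈V_n}‖u−v‖_V + 2μ‖η‖_Z. -/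
/-!
Compare `u` with an arbitrary `v ∈ Vn`. Inverse stability reduces `‖v - ũ‖` to the data misfit
`‖ℓ v - ℓ ũ‖_Z`, which the best-fit property bounds by twice the misfit `‖z - ℓ v‖_Z` of the
competitor `v`; Lipschitz continuity of `ℓ` bounds that by `α ‖u - v‖ + ‖η‖_Z`. Taking the
infimum over `v` gives the estimate.
-/

theorem le_mul_ciInf_add {ι : Type*} [Nonempty ι] {f : ι → ℝ} {a b c : ℝ} (hc : 0 ≤ c)
    (h : ∀ i, a ≤ c * f i + b) : a ≤ c * (⨅ i, f i) + b := by
  rw [Real.mul_iInf_of_nonneg hc, ← sub_le_iff_le_add]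
  exact le_ciInf fun i => sub_le_iff_le_add.mpr (h i)

section BestFit

variable {V E F : Type*} [AddGroup E] [FunLike F E ℝ]
  [AddGroupSeminormClass F E ℝ] (p : F) {ℓ : V → E} {Vn : Set V} {z : E} {ut : V}

theorem map_sub_le_two_mul_of_forall_map_sub_le
    (hmin : ∀ v ∈ Vn, p (z - ℓ ut) ≤ p (z - ℓ v)) {v : V} (hv : v ∈ Vn) :
    p (ℓ v - ℓ ut) ≤ 2 * p (z - ℓ v) :=
  calc p (ℓ v - ℓ ut) = p ((ℓ v - z) + (z - ℓ ut)) := by rw [sub_add_sub_cancel]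
    _ ≤ p (ℓ v - z) + p (z - ℓ ut) := map_add_le_add p _ _
    _ ≤ p (z - ℓ v) + p (z - ℓ v) := by rw [map_sub_rev p]; gcongr; exact hmin v hv
    _ = 2 * p (z - ℓ v) := by ring

theorem dist_le_of_forall_map_sub_le [PseudoMetricSpace V] {α μ : ℝ} (hμ : 0 ≤ μ)
    (hlip : ∀ v w, p (ℓ v - ℓ w) ≤ α * dist v w)
    (hstab : ∀ v ∈ Vn, ∀ w ∈ Vn, dist v w ≤ μ * p (ℓ v - ℓ w))
    (hut : ut ∈ Vn) (hmin : ∀ v ∈ Vn, p (z - ℓ ut) ≤ p (z - ℓ v)) (u : V) {v : V}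
    (hv : v ∈ Vn) :
    dist u ut ≤ (1 + 2 * α * μ) * dist u v + 2 * μ * p (z - ℓ u) := by
  have hmisfit : p (z - ℓ v) ≤ p (z - ℓ u) + α * dist u v :=
    calc p (z - ℓ v) = p ((z - ℓ u) + (ℓ u - ℓ v)) := by rw [sub_add_sub_cancel]
      _ ≤ p (z - ℓ u) + p (ℓ u - ℓ v) := map_add_le_add p _ _
      _ ≤ p (z - ℓ u) + α * dist u v := by gcongr; exact hlip u v
  calc dist u ut ≤ dist u v + dist v ut := dist_triangle u v ut
    _ ≤ dist u v + μ * p (ℓ v - ℓ ut) := by gcongr; exact hstab v hv ut hut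
    _ ≤ dist u v + μ * (2 * p (z - ℓ v)) := by
        gcongr; exact map_sub_le_two_mul_of_forall_map_sub_le p hmin hv
    _ ≤ dist u v + μ * (2 * (p (z - ℓ u) + α * dist u v)) := by gcongr
    _ = (1 + 2 * α * μ) * dist u v + 2 * μ * p (z - ℓ u) := by ring

end BestFit

theorem best_fit_recovery_general
    {V : Type*} [NormedAddCommGroup V]
    {m : ℕ} (Vn : Set V) (ℓ : V → (Fin m → ℝ))
    (Z : (Fin m → ℝ) → ℝ)
    (hZadd : ∀ x y, Z (x + y) ≤ Z x + Z y)
    (hZsmul : ∀ (a : ℝ) x, Z (a • x) = |a| * Z x)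
    (α μ : ℝ) (hα : 0 < α) (hμ : 0 < μ)
    (hstab : ∀ v w : V, Z (ℓ v - ℓ w) ≤ α * ‖v - w‖)
    (hinvstab : ∀ v ∈ Vn, ∀ w ∈ Vn, ‖v - w‖ ≤ μ * Z (ℓ v - ℓ w))
    (u : V) (η : Fin m → ℝ) (z : Fin m → ℝ) (hz : z = ℓ u + η)
    (ut : V) (hutmem : ut ∈ Vn)
    (hutmin : ∀ v ∈ Vn, Z (z - ℓ ut) ≤ Z (z - ℓ v)) :
    ‖u - ut‖ ≤ (1 + 2 * α * μ) * (⨅ v : Vn, ‖u - (v : V)‖) + 2 * μ * Z η := by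
  let p : Seminorm ℝ (Fin m → ℝ) := Seminorm.of Z hZadd (by simpa only [Real.norm_eq_abs])
  have hnoise : z - ℓ u = η := by rw [hz, add_sub_cancel_left]
  have : Nonempty Vn := ⟨⟨ut, hutmem⟩⟩
  simp only [← dist_eq_norm, ← hnoise]
  refine le_mul_ciInf_add (by positivity) fun v => ?_
  exact dist_le_of_forall_map_sub_le p hμ.le (fun v w => by rw [dist_eq_norm]; exact hstab v w)
    (fun v hv w hw => by rw [dist_eq_norm]; exact hinvstab v hv w hw) hutmem hutmin u v.2

/-- **Best fit estimator recovery bound** (Theorem 2.1).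
`V` Banach space, `Vn ⊆ V` arbitrary subset, `ℓ : V → ℝ^m` possibly nonlinear,
`Z` a norm on `ℝ^m`; if `ℓ` is `α`-Lipschitz on `V` (in `Z`) and `μ`-inverse stable on `Vn`,
and `ut ∈ Vn` is a best fit to `z = ℓ u + η`, then
`‖u - ut‖ ≤ (1 + 2αμ)·inf_{v ∈ Vn} ‖u - v‖ + 2μ‖η‖_Z`. -/
theorem best_fit_recovery
    {V : Type*} [NormedAddCommGroup V] [NormedSpace ℝ V] [CompleteSpace V]
    {m : ℕ} (Vn : Set V) (ℓ : V → (Fin m → ℝ))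
    (Z : (Fin m → ℝ) → ℝ)
    (hZadd : ∀ x y, Z (x + y) ≤ Z x + Z y)
    (hZsmul : ∀ (a : ℝ) x, Z (a • x) = |a| * Z x)
    (hZdef : ∀ x, Z x = 0 ↔ x = 0)
    (α μ : ℝ) (hα : 0 < α) (hμ : 0 < μ)
    (hstab : ∀ v w : V, Z (ℓ v - ℓ w) ≤ α * ‖v - w‖)
    (hinvstab : ∀ v ∈ Vn, ∀ w ∈ Vn, ‖v - w‖ ≤ μ * Z (ℓ v - ℓ w))
    (u : V) (η : Fin m → ℝ) (z : Fin m → ℝ) (hz : z = ℓ u + η)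
    (ut : V) (hutmem : ut ∈ Vn)
    (hutmin : ∀ v ∈ Vn, Z (z - ℓ ut) ≤ Z (z - ℓ v)) :
    ‖u - ut‖ ≤ (1 + 2 * α * μ) * (⨅ v : Vn, ‖u - (v : V)‖) + 2 * μ * Z η :=
  best_fit_recovery_general Vn ℓ Z hZadd hZsmul α μ hα hμ hstab hinvstab u η z hz ut hutmem hutmin
end

section
/- Let V be a Banach space, V_n ⊆ V, ℓ : V → ℝ^m as above with stability constant α_Z and inverse stability constant μ_Z with respect to a norm ‖·‖_Z on ℝ^m, and let β_Z = max_{z≠0} ‖z‖_Z/‖z‖_p for a fixed ℓ^p norm on ℝ^m. If ũ ∈ V_n is a C-near minimizer of ‖z−ℓ(v)‖_Z over V_n (i.e., ‖z−ℓ(ũ)‖_Z ≤ C‖z−ℓ(v)‖_Z for all v ∈ V_n, C ≥ 1), then ‖u−ũ‖_V ≤ (1+(1+C)α_Z μ_Z)·inf_{v∈V_n}‖u−v‖_V + (1+C)β_Z μ_Z ‖η‖_p. -/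
/-!
For every `v ∈ Vn`, inverse stability gives `‖u - ũ‖ ≤ ‖u - v‖ + μ Z(ℓ v - ℓ ũ)`. Near-minimality
of `ũ` and the triangle inequality for `Z` bound `Z(ℓ v - ℓ ũ)` by `(1 + C) Z(z - ℓ v)`, and
stability bounds `Z(z - ℓ v) = Z(ℓ u - ℓ v + η)` by `α ‖u - v‖ + β ‖η‖_p`. Taking the infimum
over `v` gives the estimate.
-/

open scoped BigOperators

/-- The `ℓ^p` norm on `ℝ^m` for `1 ≤ p < ∞`. -/
noncomputable def lpNorm {m : ℕ} (p : ℝ) (x : Fin m → ℝ) : ℝ :=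
    (∑ i, |x i| ^ p) ^ (1 / p)

theorem le_mul_iInf_add {ι : Sort*} [Nonempty ι] {f : ι → ℝ} {a c d : ℝ} (hc : 0 ≤ c)
    (h : ∀ i, a ≤ c * f i + d) : a ≤ c * (⨅ i, f i) + d := by
  rw [Real.mul_iInf_of_nonneg hc, ← sub_le_iff_le_add]
  exact le_ciInf fun i => sub_le_iff_le_add.mpr (h i)

section NearBestFit

variable {V E F : Type*} [SeminormedAddCommGroup V] [AddCommGroup E] [FunLike F E ℝ]
  [AddGroupSeminormClass F E ℝ] (N : F)

theorem map_sub_le_one_add_mul_of_le_mul {z a b : E} {C : ℝ} (hmin : N (z - a) ≤ C * N (z - b)) :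
    N (b - a) ≤ (1 + C) * N (z - b) :=
  calc N (b - a) = N ((b - z) + (z - a)) := by rw [sub_add_sub_cancel]
    _ ≤ N (b - z) + N (z - a) := map_add_le_add N _ _
    _ ≤ (1 + C) * N (z - b) := by rw [map_sub_rev N b z]; linarith

theorem norm_sub_le_of_near_min {ℓ : V → E} {s : Set V} {α μ C : ℝ}
    (hstab : ∀ v w, N (ℓ v - ℓ w) ≤ α * ‖v - w‖)
    (hinvstab : ∀ v ∈ s, ∀ w ∈ s, ‖v - w‖ ≤ μ * N (ℓ v - ℓ w)) (hμ : 0 ≤ μ) (hC : 0 ≤ C)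
    {u ut v : V} {η : E} (hut : ut ∈ s) (hv : v ∈ s)
    (hmin : N (ℓ u + η - ℓ ut) ≤ C * N (ℓ u + η - ℓ v)) :
    ‖u - ut‖ ≤ (1 + (1 + C) * α * μ) * ‖u - v‖ + (1 + C) * μ * N η := by
  have hmisfit : N (ℓ u + η - ℓ v) ≤ α * ‖u - v‖ + N η :=
    calc N (ℓ u + η - ℓ v) = N ((ℓ u - ℓ v) + η) := by rw [add_sub_right_comm]
      _ ≤ N (ℓ u - ℓ v) + N η := map_add_le_add N _ _
      _ ≤ α * ‖u - v‖ + N η := by gcongr; exact hstab u v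
  calc ‖u - ut‖ ≤ ‖u - v‖ + ‖v - ut‖ := norm_sub_le_norm_sub_add_norm_sub u v ut
    _ ≤ ‖u - v‖ + μ * N (ℓ v - ℓ ut) := by gcongr; exact hinvstab v hv ut hut
    _ ≤ ‖u - v‖ + μ * ((1 + C) * N (ℓ u + η - ℓ v)) := by
      gcongr; exact map_sub_le_one_add_mul_of_le_mul N hmin
    _ ≤ ‖u - v‖ + μ * ((1 + C) * (α * ‖u - v‖ + N η)) := by gcongr
    _ = (1 + (1 + C) * α * μ) * ‖u - v‖ + (1 + C) * μ * N η := by ring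

end NearBestFit

theorem near_best_fit_recovery_general
    {V : Type*} [NormedAddCommGroup V]
    {m : ℕ} (Vn : Set V) (ℓ : V → (Fin m → ℝ))
    (Z : (Fin m → ℝ) → ℝ)
    (hZadd : ∀ x y, Z (x + y) ≤ Z x + Z y)
    (hZsmul : ∀ (a : ℝ) x, Z (a • x) = |a| * Z x)
    (p : ℝ)
    (α μ β : ℝ) (hα : 0 < α) (hμ : 0 < μ)
    (hstab : ∀ v w : V, Z (ℓ v - ℓ w) ≤ α * ‖v - w‖)
    (hinvstab : ∀ v ∈ Vn, ∀ w ∈ Vn, ‖v - w‖ ≤ μ * Z (ℓ v - ℓ w))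
    (hβZ : ∀ x, Z x ≤ β * lpNorm p x)
    (u : V) (η : Fin m → ℝ) (z : Fin m → ℝ) (hz : z = ℓ u + η)
    (C : ℝ) (hC : 1 ≤ C)
    (ut : V) (hutmem : ut ∈ Vn)
    (hutmin : ∀ v ∈ Vn, Z (z - ℓ ut) ≤ C * Z (z - ℓ v)) :
    ‖u - ut‖ ≤ (1 + (1 + C) * α * μ) * (⨅ v : Vn, ‖u - (v : V)‖)
      + (1 + C) * β * μ * lpNorm p η := by
  let N : Seminorm ℝ (Fin m → ℝ) := Seminorm.of Z hZadd hZsmul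
  have : Nonempty Vn := ⟨⟨ut, hutmem⟩⟩
  refine le_mul_iInf_add (by positivity) fun ⟨v, hv⟩ => ?_
  subst hz
  calc ‖u - ut‖ ≤ (1 + (1 + C) * α * μ) * ‖u - v‖ + (1 + C) * μ * N η :=
        norm_sub_le_of_near_min N hstab hinvstab hμ.le (by linarith) hutmem hv (hutmin v hv)
    _ ≤ (1 + (1 + C) * α * μ) * ‖u - v‖ + (1 + C) * μ * (β * lpNorm p η) := by
        gcongr; exact hβZ η
    _ = (1 + (1 + C) * α * μ) * ‖u - v‖ + (1 + C) * β * μ * lpNorm p η := by ring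

/-- **Near-best-fit estimator recovery bound**: if `ut ∈ Vn` is a `C`-near minimizer of
`v ↦ ‖z - ℓ v‖_Z` over `Vn`, with stability constant `α`, inverse stability constant `μ`
and `β` bounding the ratio of the `Z` norm to the `ℓ^p` norm, then
`‖u - ut‖ ≤ (1 + (1+C)αμ)·inf_{v∈Vn}‖u - v‖ + (1+C)βμ‖η‖_p`. -/
theorem near_best_fit_recovery
    {V : Type*} [NormedAddCommGroup V] [NormedSpace ℝ V] [CompleteSpace V]
    {m : ℕ} (Vn : Set V) (ℓ : V → (Fin m → ℝ))
    (Z : (Fin m → ℝ) → ℝ)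
    (hZadd : ∀ x y, Z (x + y) ≤ Z x + Z y)
    (hZsmul : ∀ (a : ℝ) x, Z (a • x) = |a| * Z x)
    (hZdef : ∀ x, Z x = 0 ↔ x = 0)
    (p : ℝ) (hp : 1 ≤ p)
    (α μ β : ℝ) (hα : 0 < α) (hμ : 0 < μ) (hβ : 0 < β)
    (hstab : ∀ v w : V, Z (ℓ v - ℓ w) ≤ α * ‖v - w‖)
    (hinvstab : ∀ v ∈ Vn, ∀ w ∈ Vn, ‖v - w‖ ≤ μ * Z (ℓ v - ℓ w))
    (hβZ : ∀ x, Z x ≤ β * lpNorm p x)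
    (u : V) (η : Fin m → ℝ) (z : Fin m → ℝ) (hz : z = ℓ u + η)
    (C : ℝ) (hC : 1 ≤ C)
    (ut : V) (hutmem : ut ∈ Vn)
    (hutmin : ∀ v ∈ Vn, Z (z - ℓ ut) ≤ C * Z (z - ℓ v)) :
    ‖u - ut‖ ≤ (1 + (1 + C) * α * μ) * (⨅ v : Vn, ‖u - (v : V)‖)
      + (1 + C) * β * μ * lpNorm p η :=
  near_best_fit_recovery_general Vn ℓ Z hZadd hZsmul p α μ β hα hμ hstab hinvstab hβZ u η z hz C hC
    ut hutmem hutmin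
end

section
/- Let V be a Banach space, ℓ : V → ℝ^m surjective linear with quotient norm ‖z‖_W = min{‖v‖_V : ℓ(v)=z} attained, V_n ⊆ V with inverse stability constant μ_W = sup{‖v‖_V/‖ℓ(v)‖_W : v ∈ V_n−V_n}. Let u ∈ V, η ∈ ℝ^m, z = ℓ(u)+η, and let u* minimize v ↦ dist(v, V_n)_V over {v : ℓ(v) = z}. Then ‖u−u*‖_V ≤ (2+2μ_W)·inf_{v∈V_n}‖u−v‖_V + (1+2μ_W)‖η‖_W. -/
/-!
Pick `w` with `ℓ w = η` and `‖w‖ = W η`. Then `u + w` fits the data, so the minimality of `u*`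
gives `dist(u*, Vn) ≤ dist(u, Vn) + W η`. For `a, b ∈ Vn`, the vector `(a - u) - (b - u*) - w`
has the same data as `a - b`, so inverse stability bounds `‖a - b‖` by
`μW (‖u - a‖ + ‖u* - b‖ + W η)`. The triangle inequality through `a` and `b`, optimised over
both, yields the estimate.
-/

open Metric

lemma sInf_norm_fiber_le_norm {E β : Type*} [SeminormedAddGroup E] (f : E → β) (y : E) :
    sInf {r : ℝ | ∃ v, f v = f y ∧ ‖v‖ = r} ≤ ‖y‖ := by
  refine csInf_le ⟨0, ?_⟩ ⟨y, rfl, rfl⟩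
  rintro r ⟨v, -, rfl⟩
  exact norm_nonneg v

lemma le_mul_infDist_add {X : Type*} [PseudoMetricSpace X] {x : X} {s : Set X}
    (hs : s.Nonempty) {K C D : ℝ} (hK : 0 < K) (h : ∀ a ∈ s, C ≤ K * dist x a + D) :
    C ≤ K * infDist x s + D := by
  have : (C - D) / K ≤ infDist x s :=
    (le_infDist hs).2 fun a ha => (div_le_iff₀' hK).2 (by linarith [h a ha])
  linarith [(div_le_iff₀' hK).1 this]

lemma dist_le_of_infDist_le_of_forall_dist_le {X : Type*} [PseudoMetricSpace X] {x y : X}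
    {s : Set X} (hs : s.Nonempty) {μ c : ℝ} (hμ : 0 ≤ μ)
    (hy : infDist y s ≤ infDist x s + c)
    (hstab : ∀ a ∈ s, ∀ b ∈ s, dist a b ≤ μ * (dist x a + dist y b + c)) :
    dist x y ≤ (2 + 2 * μ) * infDist x s + (1 + 2 * μ) * c := by
  have hthrough : ∀ a ∈ s, ∀ b ∈ s,
      dist x y ≤ (1 + μ) * dist y b + ((1 + μ) * dist x a + μ * c) := by
    intro a ha b hb
    have htri := dist_triangle4 x a b y
    rw [dist_comm b y] at htri
    linarith [hstab a ha b hb]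
  have hx : ∀ a ∈ s, dist x y ≤ (1 + μ) * dist x a + ((1 + μ) * infDist y s + μ * c) :=
    fun a ha => by linarith [le_mul_infDist_add hs (by linarith) (hthrough a ha)]
  have hxy := le_mul_infDist_add hs (by linarith) hx
  linarith [mul_le_mul_of_nonneg_left hy (by linarith : (0 : ℝ) ≤ 1 + μ)]

lemma quotient_sub_le_of_map_eq {E F 𝓕 : Type*} [SeminormedAddCommGroup E] [AddCommGroup F]
    [FunLike 𝓕 E F] [AddMonoidHomClass 𝓕 E F] {ℓ : 𝓕} {W : F → ℝ}
    (hW : ∀ v, W (ℓ v) ≤ ‖v‖) {x y w : E} (hxy : ℓ y = ℓ x + ℓ w) (a b : E) :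
    W (ℓ (a - b)) ≤ dist x a + dist y b + ‖w‖ := by
  have hmap : ℓ (a - b) = ℓ ((a - x) - (b - y) - w) := by
    simp only [map_sub, hxy]
    abel
  calc W (ℓ (a - b)) ≤ ‖(a - x) - (b - y) - w‖ := hmap ▸ hW _
    _ ≤ ‖a - x‖ + ‖b - y‖ + ‖w‖ := by
      linarith [norm_sub_le (a - x - (b - y)) w, norm_sub_le (a - x) (b - y)]
    _ = dist x a + dist y b + ‖w‖ := by rw [dist_eq_norm', dist_eq_norm']

theorem generalized_interpolation_recovery_general
    {V : Type*} [NormedAddCommGroup V] [NormedSpace ℝ V]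
    {m : ℕ} (ℓ : V →L[ℝ] (Fin m → ℝ))
    (W : (Fin m → ℝ) → ℝ)
    (hW : ∀ z : Fin m → ℝ, W z = sInf {r : ℝ | ∃ v : V, ℓ v = z ∧ ‖v‖ = r})
    (hWattained : ∀ z : Fin m → ℝ, ∃ v : V, ℓ v = z ∧ ‖v‖ = W z)
    (Vn : Set V) (hVn : Vn.Nonempty)
    (μW : ℝ) (hμWpos : 0 < μW)
    (hμW : ∀ v₁ ∈ Vn, ∀ v₂ ∈ Vn, ‖v₁ - v₂‖ ≤ μW * W (ℓ (v₁ - v₂)))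
    (u : V) (η : Fin m → ℝ) (z : Fin m → ℝ) (hz : z = ℓ u + η)
    (ustar : V) (hustar_data : ℓ ustar = z)
    (hustar_min : ∀ v : V, ℓ v = z →
      Metric.infDist ustar Vn ≤ Metric.infDist v Vn) :
    ‖u - ustar‖ ≤ (2 + 2 * μW) * (⨅ v : Vn, ‖u - (v : V)‖) + (1 + 2 * μW) * W η := by
  obtain ⟨w, hwη, hwW⟩ := hWattained η
  have hWle : ∀ v, W (ℓ v) ≤ ‖v‖ := fun v => hW (ℓ v) ▸ sInf_norm_fiber_le_norm ℓ v
  have hfeasible : infDist ustar Vn ≤ infDist u Vn + W η :=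
    calc infDist ustar Vn ≤ infDist (u + w) Vn := hustar_min _ (by rw [map_add, hwη, hz])
      _ ≤ infDist u Vn + dist (u + w) u := infDist_le_infDist_add_dist
      _ = infDist u Vn + W η := by rw [dist_eq_norm, add_sub_cancel_left, hwW]
  have hstab : ∀ a ∈ Vn, ∀ b ∈ Vn, dist a b ≤ μW * (dist u a + dist ustar b + W η) := by
    intro a ha b hb
    rw [dist_eq_norm, ← hwW]
    exact (hμW a ha b hb).trans <| mul_le_mul_of_nonneg_left
      (quotient_sub_le_of_map_eq hWle (by rw [hustar_data, hz, hwη]) a b) hμWpos.le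
  have hiInf : (⨅ v : Vn, ‖u - (v : V)‖) = infDist u Vn := by
    simp only [infDist_eq_iInf, dist_eq_norm]
  rw [hiInf, ← dist_eq_norm]
  exact dist_le_of_infDist_le_of_forall_dist_le hVn hμWpos.le hfeasible hstab

/-- **Generalized interpolation estimator recovery bound** (Theorem 3.2).
`ℓ : V → ℝ^m` surjective linear, `W` the (attained) quotient norm, `μW` an inverse
stability constant on `Vn - Vn` for the `W` norm, and `ustar` a minimizer of
`v ↦ dist(v, Vn)` over `{v : ℓ v = z}` where `z = ℓ u + η`.  Then
`‖u - ustar‖ ≤ (2 + 2μW)·inf_{v∈Vn}‖u - v‖ + (1 + 2μW)·‖η‖_W`. -/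
theorem generalized_interpolation_recovery
    {V : Type*} [NormedAddCommGroup V] [NormedSpace ℝ V] [CompleteSpace V]
    {m : ℕ} (ℓ : V →L[ℝ] (Fin m → ℝ)) (hsurj : Function.Surjective ℓ)
    (W : (Fin m → ℝ) → ℝ)
    (hW : ∀ z : Fin m → ℝ, W z = sInf {r : ℝ | ∃ v : V, ℓ v = z ∧ ‖v‖ = r})
    (hWattained : ∀ z : Fin m → ℝ, ∃ v : V, ℓ v = z ∧ ‖v‖ = W z)
    (Vn : Set V) (hVn : Vn.Nonempty)
    (μW : ℝ) (hμWpos : 0 < μW)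
    (hμW : ∀ v₁ ∈ Vn, ∀ v₂ ∈ Vn, ‖v₁ - v₂‖ ≤ μW * W (ℓ (v₁ - v₂)))
    (u : V) (η : Fin m → ℝ) (z : Fin m → ℝ) (hz : z = ℓ u + η)
    (ustar : V) (hustar_data : ℓ ustar = z)
    (hustar_min : ∀ v : V, ℓ v = z →
      Metric.infDist ustar Vn ≤ Metric.infDist v Vn) :
    ‖u - ustar‖ ≤ (2 + 2 * μW) * (⨅ v : Vn, ‖u - (v : V)‖) + (1 + 2 * μW) * W η :=
  generalized_interpolation_recovery_general ℓ W hW hWattained Vn hVn μW hμWpos hμW u η z hz ustar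
    hustar_data hustar_min
end

section
/- Let u = χ_Ω ∈ F_{s,R,M} with R ≥ (3/√2)h, T a cell of side h with 3×3 stencil S contained in [0,1]², and V₂ the set of all half-plane indicators. Then inf_{v∈V₂} ‖u − v‖_{L¹(S)} ≤ M (3√2 h)^{min(s,2)+1}. -/
/-!
In the frame that `MemF` provides at `xb`, `Ω` is the subgraph `z₂ ≤ ψ z₁` of a function which,
by its Hölder bounds and the mean value theorem, stays within `κ = M ρ ^ min(s, 2)` of an affine
function on `[-ρ, ρ]`, where `ρ = 3h/√2` is the radius of the stencil. Inside the ball of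
radius `ρ`, `Ω` and the half-plane below the affine graph differ only in the strip of half-width
`κ` about the line, which fits in a rectangle of area `2κ · 2ρ ≤ M (2ρ) ^ (min(s, 2) + 1)`.
-/

open MeasureTheory
open scoped RealInnerProductSpace BigOperators

noncomputable section

abbrev Plane := EuclideanSpace ℝ (Fin 2)

def HolderBound (s R M : ℝ) (ψ : ℝ → ℝ) : Prop :=
  ContDiffOn ℝ (⌈s⌉₊ - 1 : ℕ) ψ (Set.Icc (-R) R) ∧
  (∀ j : ℕ, j ≤ ⌈s⌉₊ - 1 → ∀ t ∈ Set.Icc (-R) R,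
    |iteratedDerivWithin j ψ (Set.Icc (-R) R) t| ≤ M) ∧
  (∀ a ∈ Set.Icc (-R) R, ∀ b ∈ Set.Icc (-R) R,
    |iteratedDerivWithin (⌈s⌉₊ - 1) ψ (Set.Icc (-R) R) a -
      iteratedDerivWithin (⌈s⌉₊ - 1) ψ (Set.Icc (-R) R) b|
        ≤ M * |a - b| ^ (s - (⌈s⌉₊ - 1 : ℕ) : ℝ))

def unitSquare : Set Plane := {x | ∀ i, x i ∈ Set.Icc (0 : ℝ) 1}

def MemF (s R M : ℝ) (Ω : Set Plane) : Prop :=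
  (∀ y ∈ Ω, ∀ i, y i ∈ Set.Icc R (1 - R)) ∧
  ∀ x ∈ unitSquare, ∃ e₁ e₂ : Plane, ⟪e₁, e₂⟫ = 0 ∧ ‖e₁‖ = 1 ∧ ‖e₂‖ = 1 ∧
    ∃ ψ : ℝ → ℝ, HolderBound s R M ψ ∧
      ∀ z₁ z₂ : ℝ, |z₁| ≤ R → |z₂| ≤ R →
        ((x + z₁ • e₁ + z₂ • e₂) ∈ Ω ↔ z₂ ≤ ψ z₁)

/-- The 3×3 stencil `S` of side `3h` centered at `xb`. -/
def stencil (h : ℝ) (xb : Plane) : Set Plane :=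
  {y : Plane | |y 0 - xb 0| ≤ 3 * h / 2 ∧ |y 1 - xb 1| ≤ 3 * h / 2}

/-- The indicator function of the half-plane `{x : n⃗ · (x - xb) ≥ c}`. -/
def halfPlaneInd (xb : Plane) (nv : Plane) (c : ℝ) : Plane → ℝ :=
  Set.indicator {y : Plane | c ≤ nv 0 * (y 0 - xb 0) + nv 1 * (y 1 - xb 1)} fun _ => (1 : ℝ)

open scoped symmDiff

lemma abs_sub_le_of_not_le_iff_le {a p q : ℝ} (h : ¬(a ≤ p ↔ a ≤ q)) : |a - q| ≤ |p - q| := by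
  by_cases hp : a ≤ p <;> by_cases hq : a ≤ q <;> simp only [hp, hq, not_true] at h
  · exact abs_le_abs (by linarith) (by linarith)
  · exact abs_le_abs_of_nonpos (by linarith) (by linarith)

lemma four_mul_rpow_add_one_le {m ρ : ℝ} (hm : 1 ≤ m) (hρ : 0 ≤ ρ) :
    4 * ρ ^ (m + 1) ≤ (2 * ρ) ^ (m + 1) := by
  rw [Real.mul_rpow zero_le_two hρ]
  gcongr
  calc (4 : ℝ) = 2 ^ (2 : ℝ) := by norm_num
    _ ≤ 2 ^ (m + 1) := Real.rpow_le_rpow_of_exponent_le one_le_two (by linarith)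

lemma integral_abs_indicator_one_sub_indicator_one {X : Type*} [MeasurableSpace X] (μ : Measure X)
    {s t : Set X} (hs : MeasurableSet s) (ht : MeasurableSet t) :
    ∫ x, |s.indicator (fun _ => (1 : ℝ)) x - t.indicator (fun _ => 1) x| ∂μ = μ.real (s ∆ t) := by
  simp_rw [← Set.abs_indicator_symmDiff,
    abs_of_nonneg (Set.indicator_nonneg (fun _ _ => zero_le_one) _)]
  exact integral_indicator_one (hs.symmDiff ht)

section InnerProductSpace

variable {E : Type*} [NormedAddCommGroup E] [InnerProductSpace ℝ E]

lemma exists_unit_normal_of_affine {e₁ e₂ : E} (he : Orthonormal ℝ ![e₁, e₂]) (a D : ℝ) :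
    ∃ n : E, ‖n‖ = 1 ∧ ∃ c : ℝ, ∀ z₁ z₂ : ℝ,
      (c ≤ ⟪n, z₁ • e₁ + z₂ • e₂⟫ ↔ z₂ ≤ a + D * z₁) ∧
      |⟪n, z₁ • e₁ + z₂ • e₂⟫ - c| ≤ |z₂ - (a + D * z₁)| := by
  have hn₁ : ‖e₁‖ = 1 := by simpa using he.1 0
  have hn₂ : ‖e₂‖ = 1 := by simpa using he.1 1
  have h₁₂ : ⟪e₁, e₂⟫ = 0 := by simpa using he.2 (show (0 : Fin 2) ≠ 1 by decide)
  set w : E := D • e₁ - e₂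
  have hw : ∀ z₁ z₂ : ℝ, ⟪w, z₁ • e₁ + z₂ • e₂⟫ = D * z₁ - z₂ := fun z₁ z₂ => by
    simp only [w, inner_sub_left, inner_add_right, real_inner_smul_left, real_inner_smul_right,
      real_inner_self_eq_norm_sq, hn₁, hn₂, h₁₂, real_inner_comm e₁ e₂]
    ring
  have hw₁ : 1 ≤ ‖w‖ := by
    calc 1 = |⟪w, (0 : ℝ) • e₁ + (1 : ℝ) • e₂⟫| := by rw [hw]; norm_num
      _ ≤ ‖w‖ := by simpa [hn₂] using abs_real_inner_le_norm w e₂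
  have hw₀ : 0 < ‖w‖⁻¹ := inv_pos.mpr (by linarith)
  refine ⟨‖w‖⁻¹ • w, by rw [norm_smul, norm_inv, norm_norm, inv_mul_cancel₀ (by linarith)],
    ‖w‖⁻¹ * -a, fun z₁ z₂ => ⟨?_, ?_⟩⟩
  · rw [real_inner_smul_left, hw, mul_le_mul_iff_right₀ hw₀]
    constructor <;> intro h <;> linarith
  · rw [real_inner_smul_left, hw, ← mul_sub, abs_mul, abs_of_pos hw₀, ← abs_neg]
    calc ‖w‖⁻¹ * |-(D * z₁ - z₂ - -a)| ≤ 1 * |-(D * z₁ - z₂ - -a)| := by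
          gcongr; exact inv_le_one_of_one_le₀ hw₁
      _ = |z₂ - (a + D * z₁)| := by ring_nf

variable [FiniteDimensional ℝ E]

lemma eq_inner_smul_add_inner_smul (hE : Module.finrank ℝ E = 2) {e₁ e₂ : E}
    (he : Orthonormal ℝ ![e₁, e₂]) (v : E) : v = ⟪e₁, v⟫ • e₁ + ⟪e₂, v⟫ • e₂ := by
  obtain ⟨b, hb⟩ := Orthonormal.exists_orthonormalBasis_extension_of_card_eq (𝕜 := ℝ)
    (s := Set.univ) (by simpa using hE) (he.comp _ Subtype.val_injective)
  have h₀ : b 0 = e₁ := hb 0 trivial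
  have h₁ : b 1 = e₂ := hb 1 trivial
  simpa [Fin.sum_univ_two, h₀, h₁] using (b.sum_repr' v).symm

lemma exists_unit_normal_symmDiff_inter_closedBall_subset (hE : Module.finrank ℝ E = 2)
    {x e₁ e₂ : E} (he : Orthonormal ℝ ![e₁, e₂]) {Ω : Set E} {ψ : ℝ → ℝ} {ρ a D κ : ℝ}
    (hΩ : ∀ z₁ z₂ : ℝ, |z₁| ≤ ρ → |z₂| ≤ ρ → (x + z₁ • e₁ + z₂ • e₂ ∈ Ω ↔ z₂ ≤ ψ z₁))
    (hψ : ∀ z ∈ Set.Icc (-ρ) ρ, |ψ z - (a + D * z)| ≤ κ) :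
    ∃ n : E, ‖n‖ = 1 ∧ ∃ c : ℝ,
      (Ω ∆ {y | c ≤ ⟪n, y - x⟫}) ∩ Metric.closedBall x ρ ⊆ {y | |⟪n, y - x⟫ - c| ≤ κ} := by
  obtain ⟨n, hn, c, hnc⟩ := exists_unit_normal_of_affine he a D
  refine ⟨n, hn, c, fun y ⟨hy, hball⟩ => ?_⟩
  set z₁ := ⟪e₁, y - x⟫
  set z₂ := ⟪e₂, y - x⟫
  have hyx : y - x = z₁ • e₁ + z₂ • e₂ := eq_inner_smul_add_inner_smul hE he (y - x)
  have hz : ∀ i, |⟪![e₁, e₂] i, y - x⟫| ≤ ρ := fun i =>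
    (abs_real_inner_le_norm _ _).trans (by rw [he.1 i, one_mul, ← dist_eq_norm]; exact hball)
  have hz₁ : |z₁| ≤ ρ := hz 0
  have hmemΩ : y ∈ Ω ↔ z₂ ≤ ψ z₁ := by
    rw [← hΩ z₁ z₂ hz₁ (hz 1), add_assoc, ← hyx, add_sub_cancel]
  have hmemH : y ∈ {y | c ≤ ⟪n, y - x⟫} ↔ z₂ ≤ a + D * z₁ := by
    rw [Set.mem_ofPred_eq, hyx]
    exact (hnc z₁ z₂).1
  have hne : ¬(z₂ ≤ ψ z₁ ↔ z₂ ≤ a + D * z₁) := by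
    rw [← hmemΩ, ← hmemH]
    rw [Set.mem_symmDiff] at hy
    tauto
  show |⟪n, y - x⟫ - c| ≤ κ
  calc |⟪n, y - x⟫ - c| ≤ |z₂ - (a + D * z₁)| := hyx ▸ (hnc z₁ z₂).2
    _ ≤ |ψ z₁ - (a + D * z₁)| := abs_sub_le_of_not_le_iff_le hne
    _ ≤ κ := hψ z₁ (abs_le.mp hz₁)

variable [MeasurableSpace E] [BorelSpace E]

lemma OrthonormalBasis.volume_setOf_inner_sub_mem_Icc {ι : Type*} [Fintype ι]
    (b : OrthonormalBasis ι ℝ E) (x : E) (a c : ι → ℝ) :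
    volume {y | ∀ i, ⟪b i, y - x⟫ ∈ Set.Icc (a i) (c i)} = ∏ i, ENNReal.ofReal (c i - a i) := by
  have hIcc : MeasurableSet (WithLp.ofLp ⁻¹' Set.Icc a c : Set (EuclideanSpace ℝ ι)) :=
    measurableSet_Icc.preimage (PiLp.volume_preserving_ofLp ι).measurable
  have hset : {y | ∀ i, ⟪b i, y - x⟫ ∈ Set.Icc (a i) (c i)} =
      (fun y => y + -x) ⁻¹' (b.repr ⁻¹' (WithLp.ofLp ⁻¹' Set.Icc a c)) := by
    ext y
    simp only [Set.mem_ofPred_eq, Set.mem_preimage, ← sub_eq_add_neg, Set.mem_Icc, Pi.le_def,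
      forall_and, b.repr_apply_apply]
  rw [hset, measure_preimage_add_right,
    b.measurePreserving_repr.measure_preimage hIcc.nullMeasurableSet,
    (PiLp.volume_preserving_ofLp ι).measure_preimage measurableSet_Icc.nullMeasurableSet,
    Real.volume_Icc_pi]

lemma volume_setOf_abs_inner_sub_le_inter_closedBall_le (hE : Module.finrank ℝ E = 2) {n : E}
    (hn : ‖n‖ = 1) (x : E) (c κ ρ : ℝ) :
    volume ({y | |⟪n, y - x⟫ - c| ≤ κ} ∩ Metric.closedBall x ρ) ≤
      ENNReal.ofReal (2 * κ) * ENNReal.ofReal (2 * ρ) := by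
  have hon : Orthonormal ℝ (({0} : Set (Fin 2)).domRestrict fun _ => n) := by
    rw [orthonormal_iff_ite]
    intro i j
    simp [Subsingleton.elim i j, Set.domRestrict, hn]
  obtain ⟨b, hb⟩ := Orthonormal.exists_orthonormalBasis_extension_of_card_eq (𝕜 := ℝ)
    (by simpa using hE) hon
  have hb₀ : b 0 = n := hb 0 rfl
  calc volume ({y | |⟪n, y - x⟫ - c| ≤ κ} ∩ Metric.closedBall x ρ)
      ≤ volume {y | ∀ i, ⟪b i, y - x⟫ ∈ Set.Icc (![c - κ, -ρ] i) (![c + κ, ρ] i)} := by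
        refine measure_mono fun y ⟨hslab, hball⟩ => Fin.forall_fin_two.mpr ⟨?_, ?_⟩
        · simp only [Set.mem_ofPred_eq, abs_sub_le_iff] at hslab
          simp only [Matrix.cons_val_zero, hb₀, Set.mem_Icc]
          constructor <;> linarith
        · simpa [abs_le] using (abs_real_inner_le_norm (b 1) (y - x)).trans
            (by rw [b.orthonormal.1 1, one_mul, ← dist_eq_norm]; exact hball)
    _ = ENNReal.ofReal (2 * κ) * ENNReal.ofReal (2 * ρ) := by
        rw [b.volume_setOf_inner_sub_mem_Icc, Fin.prod_univ_two]
        simp only [Matrix.cons_val_zero, Matrix.cons_val_one, Matrix.cons_val_fin_one]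
        congr 2 <;> ring

end InnerProductSpace

lemma Convex.abs_sub_sub_mul_le_of_abs_deriv_sub_le {f f' : ℝ → ℝ} {s : Set ℝ} (hs : Convex ℝ s)
    (hf : ∀ x ∈ s, HasDerivWithinAt f (f' x) s x) {C x y : ℝ} (hx : x ∈ s) (hy : y ∈ s)
    (bound : ∀ t ∈ s, |f' t - f' x| ≤ C) : |f y - f x - f' x * (y - x)| ≤ C * |y - x| := by
  have hg : ∀ t ∈ s, HasDerivWithinAt (fun t => f t - f' x * t) (f' t - f' x) s t := fun t ht =>
    (hf t ht).sub (by simpa using (hasDerivWithinAt_id t s).const_mul (f' x))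
  have := hs.norm_image_sub_le_of_norm_hasDerivWithin_le hg bound hx hy
  simp only [Real.norm_eq_abs] at this
  convert this using 2
  ring

namespace HolderBound

variable {s R M : ℝ} {ψ : ℝ → ℝ}

theorem abs_sub_le_of_le_one (hψ : HolderBound s R M ψ) (hs : s ≤ 1) {a b : ℝ}
    (ha : a ∈ Set.Icc (-R) R) (hb : b ∈ Set.Icc (-R) R) : |ψ a - ψ b| ≤ M * |a - b| ^ s := by
  have hceil : ⌈s⌉₊ - 1 = 0 := by
    have := Nat.ceil_le.mpr (show s ≤ ((1 : ℕ) : ℝ) by exact_mod_cast hs)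
    omega
  simpa [hceil] using hψ.2.2 a ha b hb

theorem differentiableOn (hψ : HolderBound s R M ψ) (hs : 1 < s) :
    DifferentiableOn ℝ ψ (Set.Icc (-R) R) := by
  refine hψ.1.differentiableOn ?_
  have : 1 < ⌈s⌉₊ := Nat.lt_ceil.mpr (by exact_mod_cast hs)
  exact_mod_cast (show ⌈s⌉₊ - 1 ≠ 0 by omega)

theorem abs_derivWithin_sub_le_of_le_two (hψ : HolderBound s R M ψ) (hs : 1 < s) (hs₂ : s ≤ 2)
    {a b : ℝ} (ha : a ∈ Set.Icc (-R) R) (hb : b ∈ Set.Icc (-R) R) :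
    |derivWithin ψ (Set.Icc (-R) R) a - derivWithin ψ (Set.Icc (-R) R) b| ≤
      M * |a - b| ^ (s - 1) := by
  have hceil : ⌈s⌉₊ = 2 :=
    (Nat.ceil_eq_iff two_ne_zero).mpr ⟨by norm_num [hs], by exact_mod_cast hs₂⟩
  simpa [hceil, iteratedDerivWithin_one] using hψ.2.2 a ha b hb

theorem abs_derivWithin_sub_le_of_two_lt (hψ : HolderBound s R M ψ) (hs : 2 < s) (hR : 0 < R)
    {a b : ℝ} (ha : a ∈ Set.Icc (-R) R) (hb : b ∈ Set.Icc (-R) R) :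
    |derivWithin ψ (Set.Icc (-R) R) a - derivWithin ψ (Set.Icc (-R) R) b| ≤ M * |a - b| := by
  have hceil : 2 ≤ ⌈s⌉₊ - 1 := by
    have : 2 < ⌈s⌉₊ := Nat.lt_ceil.mpr (by exact_mod_cast hs)
    omega
  have hC1 : ContDiffOn ℝ 1 (derivWithin ψ (Set.Icc (-R) R)) (Set.Icc (-R) R) :=
    hψ.1.derivWithin (uniqueDiffOn_Icc (by linarith)) (by exact_mod_cast hceil)
  have hbound : ∀ t ∈ Set.Icc (-R) R,
      ‖derivWithin (derivWithin ψ (Set.Icc (-R) R)) (Set.Icc (-R) R) t‖ ≤ M := fun t ht => by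
    simpa [iteratedDerivWithin_succ, iteratedDerivWithin_one] using hψ.2.1 2 hceil t ht
  simpa using (convex_Icc (-R) R).norm_image_sub_le_of_norm_derivWithin_le
    (hC1.differentiableOn one_ne_zero) hbound hb ha

theorem abs_derivWithin_sub_le (hψ : HolderBound s R M ψ) (hs : 1 < s) (hR : 0 < R)
    {a b : ℝ} (ha : a ∈ Set.Icc (-R) R) (hb : b ∈ Set.Icc (-R) R) :
    |derivWithin ψ (Set.Icc (-R) R) a - derivWithin ψ (Set.Icc (-R) R) b| ≤
      M * |a - b| ^ (min s 2 - 1) := by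
  rcases le_or_gt s 2 with hs₂ | hs₂
  · rw [min_eq_left hs₂]
    exact hψ.abs_derivWithin_sub_le_of_le_two hs hs₂ ha hb
  · rw [min_eq_right hs₂.le, show (2 : ℝ) - 1 = 1 by norm_num, Real.rpow_one]
    exact hψ.abs_derivWithin_sub_le_of_two_lt hs₂ hR ha hb

theorem exists_affine_approx (hψ : HolderBound s R M ψ) (hs : 1 ≤ s) (hM : 0 ≤ M) {ρ : ℝ}
    (hρ : 0 < ρ) (hρR : ρ ≤ R) :
    ∃ D : ℝ, ∀ z ∈ Set.Icc (-ρ) ρ, |ψ z - (ψ 0 + D * z)| ≤ M * ρ ^ min s 2 := by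
  have hsub : Set.Icc (-ρ) ρ ⊆ Set.Icc (-R) R := Set.Icc_subset_Icc (neg_le_neg hρR) hρR
  have h0 : (0 : ℝ) ∈ Set.Icc (-ρ) ρ := ⟨by linarith, hρ.le⟩
  have habs : ∀ z ∈ Set.Icc (-ρ) ρ, |z| ≤ ρ := fun z hz => abs_le.mpr hz
  rcases hs.eq_or_lt with rfl | hs
  · refine ⟨0, fun z hz => ?_⟩
    have := hψ.abs_sub_le_of_le_one le_rfl (hsub hz) (hsub h0)
    rw [min_eq_left one_le_two, Real.rpow_one]
    simpa using this.trans (by gcongr; simpa using habs z hz)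
  · refine ⟨derivWithin ψ (Set.Icc (-R) R) 0, fun z hz => ?_⟩
    have hf : ∀ x ∈ Set.Icc (-ρ) ρ,
        HasDerivWithinAt ψ (derivWithin ψ (Set.Icc (-R) R) x) (Set.Icc (-ρ) ρ) x :=
      fun x hx => ((hψ.differentiableOn hs x (hsub hx)).hasDerivWithinAt).mono hsub
    have hσ : 0 ≤ min s 2 - 1 := by rw [sub_nonneg]; exact le_min hs.le one_le_two
    have bound : ∀ t ∈ Set.Icc (-ρ) ρ, |derivWithin ψ (Set.Icc (-R) R) t -
        derivWithin ψ (Set.Icc (-R) R) 0| ≤ M * ρ ^ (min s 2 - 1) := fun t ht =>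
      (hψ.abs_derivWithin_sub_le hs (hρ.trans_le hρR) (hsub ht) (hsub h0)).trans
        (by gcongr; simpa using habs t ht)
    calc |ψ z - (ψ 0 + derivWithin ψ (Set.Icc (-R) R) 0 * z)|
        = |ψ z - ψ 0 - derivWithin ψ (Set.Icc (-R) R) 0 * (z - 0)| := by ring_nf
      _ ≤ M * ρ ^ (min s 2 - 1) * |z - 0| :=
        (convex_Icc (-ρ) ρ).abs_sub_sub_mul_le_of_abs_deriv_sub_le hf h0 hz bound
      _ ≤ M * ρ ^ (min s 2 - 1) * ρ := by gcongr; simpa using habs z hz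
      _ = M * ρ ^ min s 2 := by rw [mul_assoc, ← Real.rpow_add_one hρ.ne', sub_add_cancel]

end HolderBound

lemma stencil_subset_closedBall (h : ℝ) (xb : Plane) :
    stencil h xb ⊆ Metric.closedBall xb (3 / Real.sqrt 2 * h) := by
  rintro y ⟨hy₀, hy₁⟩
  have hh : 0 ≤ h := by linarith [abs_nonneg (y 0 - xb 0)]
  have hsq : ∀ i, |y i - xb i| ≤ 3 * h / 2 → (y i - xb i) ^ 2 ≤ (3 * h / 2) ^ 2 := fun i hi => by
    rw [← sq_abs]; gcongr
  rw [Metric.mem_closedBall, EuclideanSpace.dist_eq, Fin.sum_univ_two,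
    Real.sqrt_le_left (by positivity), Real.dist_eq, Real.dist_eq, sq_abs, sq_abs, mul_pow, div_pow,
    Real.sq_sqrt zero_le_two]
  linarith [hsq 0 hy₀, hsq 1 hy₁]

lemma halfPlaneInd_eq_indicator (xb nv : Plane) (c : ℝ) :
    halfPlaneInd xb nv c = {y | c ≤ ⟪nv, y - xb⟫}.indicator fun _ => 1 := by
  ext y
  simp [halfPlaneInd, PiLp.inner_apply, Fin.sum_univ_two, mul_comm]

theorem local_halfplane_approximation_general
    (s R M : ℝ) (hs : 1 ≤ s) (hM : 0 < M) (h : ℝ) (hh : 0 < h)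
    (hR : 3 / Real.sqrt 2 * h ≤ R)
    (xb : Plane) (hxb : xb ∈ unitSquare)
    (Ω : Set Plane) (hΩmeas : MeasurableSet Ω) (hΩ : MemF s R M Ω) :
    sInf {r : ℝ | ∃ (nv : Plane) (c : ℝ), ‖nv‖ = 1 ∧
        r = ∫ y in stencil h xb,
              |Set.indicator Ω (fun _ => (1 : ℝ)) y - halfPlaneInd xb nv c y|}
      ≤ M * (3 * Real.sqrt 2 * h) ^ (min s 2 + 1) := by
  set ρ := 3 / Real.sqrt 2 * h
  have hρ : 0 < ρ := by positivity
  obtain ⟨e₁, e₂, h₁₂, h₁, h₂, ψ, hψ, hΩψ⟩ := hΩ.2 xb hxb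
  obtain ⟨D, hD⟩ := hψ.exists_affine_approx hs hM.le hρ hR
  obtain ⟨n, hn, c, hsub⟩ := exists_unit_normal_symmDiff_inter_closedBall_subset
    finrank_euclideanSpace_fin (by simp [h₁, h₂, h₁₂])
    (fun z₁ z₂ hz₁ hz₂ => hΩψ z₁ z₂ (hz₁.trans hR) (hz₂.trans hR)) hD
  have hH : MeasurableSet {y : Plane | c ≤ ⟪n, y - xb⟫} :=
    measurableSet_le measurable_const (by fun_prop)
  refine csInf_le_of_le ⟨0, ?_⟩ ⟨n, c, hn, rfl⟩ ?_
  · rintro _ ⟨_, _, _, rfl⟩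
    exact integral_nonneg fun _ => abs_nonneg _
  rw [halfPlaneInd_eq_indicator, integral_abs_indicator_one_sub_indicator_one _ hΩmeas hH,
    measureReal_restrict_apply (hΩmeas.symmDiff hH)]
  have hvol : volume ((Ω ∆ {y | c ≤ ⟪n, y - xb⟫}) ∩ stencil h xb) ≤
      ENNReal.ofReal (2 * (M * ρ ^ min s 2)) * ENNReal.ofReal (2 * ρ) := by
    refine (measure_mono ?_).trans (volume_setOf_abs_inner_sub_le_inter_closedBall_le
      finrank_euclideanSpace_fin hn xb c _ ρ)
    have hS := Set.inter_subset_inter_right (Ω ∆ {y | c ≤ ⟪n, y - xb⟫})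
      (stencil_subset_closedBall h xb)
    exact Set.subset_inter (hS.trans hsub) (hS.trans Set.inter_subset_right)
  calc volume.real ((Ω ∆ {y | c ≤ ⟪n, y - xb⟫}) ∩ stencil h xb)
      ≤ 2 * (M * ρ ^ min s 2) * (2 * ρ) := by
        rw [← ENNReal.ofReal_mul (by positivity)] at hvol
        exact ENNReal.toReal_le_of_le_ofReal (by positivity) hvol
    _ = M * (4 * ρ ^ (min s 2 + 1)) := by rw [Real.rpow_add_one hρ.ne']; ring
    _ ≤ M * (2 * ρ) ^ (min s 2 + 1) := by
        gcongr; exact four_mul_rpow_add_one_le (le_min hs one_le_two) hρ.le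
    _ = M * (3 * Real.sqrt 2 * h) ^ (min s 2 + 1) := by
        congr 2
        simp only [ρ]
        field_simp
        rw [Real.sq_sqrt zero_le_two]

/-- **Local approximation by half-plane indicators** (Lemma 5.2): for `u = χ_Ω` in
`F_{s,R,M}` with `R ≥ (3/√2) h`, the best `L¹(S)` approximation of `u` on the 3×3
stencil `S` centered at `xb` from the family `V₂` of half-plane indicators satisfies
`inf_{v ∈ V₂} ‖u − v‖_{L¹(S)} ≤ M (3√2 h)^{min(s,2)+1}`. -/
theorem local_halfplane_approximation
    (s R M : ℝ) (hs : 1 ≤ s) (hM : 0 < M) (h : ℝ) (hh : 0 < h)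
    (hR : 3 / Real.sqrt 2 * h ≤ R)
    (xb : Plane) (hxb : xb ∈ unitSquare) (hS : stencil h xb ⊆ unitSquare)
    (Ω : Set Plane) (hΩmeas : MeasurableSet Ω) (hΩ : MemF s R M Ω) :
    sInf {r : ℝ | ∃ (nv : Plane) (c : ℝ), ‖nv‖ = 1 ∧
        r = ∫ y in stencil h xb,
              |Set.indicator Ω (fun _ => (1 : ℝ)) y - halfPlaneInd xb nv c y|}
      ≤ M * (3 * Real.sqrt 2 * h) ^ (min s 2 + 1) :=
  local_halfplane_approximation_general s R M hs hM h hh hR xb hxb Ω hΩmeas hΩ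

end
end

section
/- Let Φ be an m×N real matrix, V = ℝ^N with a norm ‖·‖_V, V_k the set of k-sparse vectors, and e_k(u)_V = min_{v∈V_k}‖u−v‖_V. If there exists a recovery map R : ℝ^m → ℝ^N with ‖u−R(Φu)‖_V ≤ C₀ e_n(u)_V for all u ∈ ℝ^N (instance optimality IOP(n,C₀)), then Φ satisfies the null space property NSP(2n,C₀): ‖v‖_V ≤ C₀ e_{2n}(v)_V for all v with Φv = 0. Conversely, NSP(2n,C₁) implies existence of a map R with IOP(n,2C₁). -/
noncomputable section

/-- The best `k`-term (sparse) approximation error `e_k(u)_V` of `u ∈ ℝ^N` in the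
norm `normV`. -/
def bestTermErr {N : ℕ} (normV : (Fin N → ℝ) → ℝ) (k : ℕ) (u : Fin N → ℝ) : ℝ :=
  sInf {r : ℝ | ∃ v : Fin N → ℝ, {i | v i ≠ 0}.ncard ≤ k ∧ r = normV (u - v)}

/-!
An instance optimal decoder recovers `n`-sparse vectors exactly. Given `v ∈ ker Φ` and a
`2n`-sparse `z`, split `z = z₁ + z₂` into `n`-sparse parts: `v - z₂` and `-z₂` have the same
measurements, so `v` is the difference of the two recovery errors, the second of which vanishes,
and the first is at most `C₀ e_n(v - z₂)_V ≤ C₀ ‖v - z‖_V`.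

Conversely, let `Rec y` minimise `e_n(·)_V` over the fibre `Φ⁻¹ y`. The minimum is attained: a
norm on `ℝ^N` is continuous and coercive, and the set of `z - v` with `Φ z = y` and `v` `n`-sparse
is a finite union of closed affine subspaces. Then `u - Rec (Φ u) ∈ ker Φ`, and
`e_{2n}(u - Rec (Φ u))_V ≤ e_n(u)_V + e_n(Rec (Φ u))_V ≤ 2 e_n(u)_V`.
-/

open Function Set Filter Matrix

theorem ncard_support_sub_le {ι G : Type*} [Finite ι] [AddGroup G] (v w : ι → G) :
    (support (v - w)).ncard ≤ (support v).ncard + (support w).ncard :=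
  (ncard_le_ncard (support_sub v w)).trans (ncard_union_le _ _)

theorem exists_add_eq_of_ncard_support_le_add {ι M : Type*} [Finite ι] [AddZeroClass M]
    (z : ι → M) {a b : ℕ} (h : (support z).ncard ≤ a + b) :
    ∃ z₁ z₂ : ι → M, z₁ + z₂ = z ∧ (support z₁).ncard ≤ a ∧ (support z₂).ncard ≤ b := by
  obtain ⟨S, hSz, hS⟩ := exists_subset_card_eq (min_le_right a (support z).ncard)
  refine ⟨S.indicator z, Sᶜ.indicator z, indicator_self_add_compl S z, ?_, ?_⟩
  · rw [support_indicator, inter_eq_left.2 hSz, hS]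
    exact min_le_left _ _
  · rw [support_indicator, ← sdiff_eq_compl_inter, ncard_sdiff hSz, hS]
    omega

section BestTermErr

variable {N : ℕ}

theorem le_bestTermErr {normV : (Fin N → ℝ) → ℝ} {k : ℕ} {u : Fin N → ℝ} {b : ℝ}
    (h : ∀ v, (support v).ncard ≤ k → b ≤ normV (u - v)) : b ≤ bestTermErr normV k u :=
  le_csInf ⟨normV u, 0, by simp, by simp⟩ (by rintro _ ⟨v, hv, rfl⟩; exact h v hv)

theorem le_mul_bestTermErr {normV : (Fin N → ℝ) → ℝ} {k : ℕ} {u : Fin N → ℝ} {b C : ℝ}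
    (hC : 0 < C) (h : ∀ v, (support v).ncard ≤ k → b ≤ C * normV (u - v)) :
    b ≤ C * bestTermErr normV k u :=
  (div_le_iff₀' hC).1 (le_bestTermErr fun v hv => (div_le_iff₀' hC).2 (h v hv))

variable (p : Seminorm ℝ (Fin N → ℝ))

theorem bestTermErr_le {k : ℕ} {u v : Fin N → ℝ} (hv : (support v).ncard ≤ k) :
    bestTermErr p k u ≤ p (u - v) :=
  csInf_le ⟨0, by rintro _ ⟨w, -, rfl⟩; exact apply_nonneg p _⟩ ⟨v, hv, rfl⟩

theorem bestTermErr_sub_le {a b : ℕ} (u z : Fin N → ℝ) :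
    bestTermErr p (a + b) (u - z) ≤ bestTermErr p a u + bestTermErr p b z := by
  have key : ∀ v w : Fin N → ℝ, (support v).ncard ≤ a → (support w).ncard ≤ b →
      bestTermErr p (a + b) (u - z) ≤ p (u - v) + p (z - w) := by
    intro v w hv hw
    calc bestTermErr p (a + b) (u - z)
        ≤ p (u - z - (v - w)) :=
          bestTermErr_le p ((ncard_support_sub_le v w).trans (add_le_add hv hw))
      _ = p (u - v - (z - w)) := by congr 1; abel
      _ ≤ p (u - v) + p (z - w) := map_sub_le_add p _ _
  have h : ∀ v : Fin N → ℝ, (support v).ncard ≤ a →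
      bestTermErr p (a + b) (u - z) - bestTermErr p b z ≤ p (u - v) := by
    intro v hv
    have := le_bestTermErr (normV := p) (b := bestTermErr p (a + b) (u - z) - p (u - v))
      fun w hw => by linarith [key v w hv hw]
    linarith
  linarith [le_bestTermErr h]

end BestTermErr

section FiniteDimensional

variable {E : Type*} [NormedAddCommGroup E] [NormedSpace ℝ E] [FiniteDimensional ℝ E]
  (p : Seminorm ℝ E)

theorem Seminorm.continuous_of_finiteDimensional : Continuous p :=
  continuousOn_univ.1 (p.convexOn.continuousOn isOpen_univ)

theorem Seminorm.exists_pos_mul_norm_le (hp : ∀ x, p x = 0 → x = 0) :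
    ∃ c > 0, ∀ x, c * ‖x‖ ≤ p x := by
  have := FiniteDimensional.proper_real E
  rcases subsingleton_or_nontrivial E with hE | hE
  · exact ⟨1, one_pos, fun x => by simp [Subsingleton.elim x 0]⟩
  obtain ⟨z, hz, hmin⟩ := (isCompact_sphere (0 : E) 1).exists_isMinOn
    (NormedSpace.sphere_nonempty.2 zero_le_one) p.continuous_of_finiteDimensional.continuousOn
  have hz0 : z ≠ 0 := ne_zero_of_mem_unit_sphere ⟨z, hz⟩
  refine ⟨p z, (apply_nonneg p z).lt_of_ne' (mt (hp z) hz0), fun x => ?_⟩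
  rcases eq_or_ne x 0 with rfl | hx
  · simp
  have hx' : 0 < ‖x‖ := norm_pos_iff.2 hx
  have h : p z ≤ p (‖x‖⁻¹ • x) := hmin (by simp [norm_smul, hx'.ne'])
  rw [map_smul_eq_mul, norm_inv, norm_norm, le_inv_mul_iff₀ hx'] at h
  linarith

theorem Seminorm.tendsto_cocompact_atTop (hp : ∀ x, p x = 0 → x = 0) :
    Tendsto p (cocompact E) atTop := by
  have := FiniteDimensional.proper_real E
  obtain ⟨c, hc, hcp⟩ := p.exists_pos_mul_norm_le hp
  exact tendsto_atTop_mono hcp (tendsto_norm_cocompact_atTop.const_mul_atTop hc)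

theorem Seminorm.exists_isMinOn_of_isClosed (hp : ∀ x, p x = 0 → x = 0) {D : Set E}
    (hD : IsClosed D) (hne : D.Nonempty) : ∃ d ∈ D, IsMinOn p D d := by
  obtain ⟨x₀, hx₀⟩ := hne
  exact p.continuous_of_finiteDimensional.continuousOn.exists_isMinOn' hD hx₀
    (((p.tendsto_cocompact_atTop hp).eventually_ge_atTop (p x₀)).filter_mono inf_le_left)

end FiniteDimensional

section Matrix

variable {m N : ℕ}

theorem isClosed_setOf_exists_sparse_mulVec_add_eq (Φ : Matrix (Fin m) (Fin N) ℝ) (n : ℕ)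
    (y : Fin m → ℝ) :
    IsClosed {x | ∃ v : Fin N → ℝ, (support v).ncard ≤ n ∧ Φ *ᵥ (x + v) = y} := by
  let W (S : Set (Fin N)) : Submodule ℝ (Fin N → ℝ) := Submodule.pi Sᶜ fun _ => ⊥
  have hW (S : Set (Fin N)) (v : Fin N → ℝ) : v ∈ W S ↔ support v ⊆ S := by
    rw [support_subset_iff']
    simp [W, Submodule.mem_pi]
  have hunion : {x | ∃ v : Fin N → ℝ, (support v).ncard ≤ n ∧ Φ *ᵥ (x + v) = y} =
      ⋃ S ∈ {S : Set (Fin N) | S.ncard ≤ n},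
        (fun x => Φ *ᵥ x - y) ⁻¹' (W S).map Φ.mulVecLin := by
    ext x
    simp only [mem_ofPred_eq, mem_iUnion, mem_preimage, SetLike.mem_coe, Submodule.mem_map, hW,
      Matrix.mulVecLin_apply, exists_prop]
    constructor
    · rintro ⟨v, hv, hxv⟩
      refine ⟨support v, hv, -v, by rw [support_neg], ?_⟩
      rw [← hxv, Matrix.mulVec_add, Matrix.mulVec_neg]
      abel
    · rintro ⟨S, hS, w, hwS, hw⟩
      refine ⟨-w, (ncard_le_ncard (by rwa [support_neg])).trans hS, ?_⟩
      rw [Matrix.mulVec_add, Matrix.mulVec_neg, hw]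
      abel
  rw [hunion]
  exact (toFinite _).isClosed_biUnion fun S _ => (Submodule.closed_of_finiteDimensional _).preimage
    ((Continuous.matrix_mulVec continuous_const continuous_id).sub continuous_const)

variable (p : Seminorm ℝ (Fin N → ℝ)) (hp : ∀ x, p x = 0 → x = 0)
include hp

theorem exists_isMinOn_bestTermErr_fiber (Φ : Matrix (Fin m) (Fin N) ℝ) (n : ℕ)
    (z₀ : Fin N → ℝ) :
    ∃ z ∈ {z | Φ *ᵥ z = Φ *ᵥ z₀}, IsMinOn (bestTermErr p n) {z | Φ *ᵥ z = Φ *ᵥ z₀} z := by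
  obtain ⟨d, ⟨v, hv, hdv⟩, hmin⟩ := p.exists_isMinOn_of_isClosed hp
    (isClosed_setOf_exists_sparse_mulVec_add_eq Φ n (Φ *ᵥ z₀)) ⟨z₀, 0, by simp, by simp⟩
  refine ⟨d + v, hdv, fun z hz => ?_⟩
  calc bestTermErr p n (d + v) ≤ p (d + v - v) := bestTermErr_le p hv
    _ = p d := by rw [add_sub_cancel_right]
    _ ≤ bestTermErr p n z := le_bestTermErr fun w hw => hmin ⟨w, hw, by rwa [sub_add_cancel]⟩

theorem exists_decoder_isMinOn_bestTermErr (Φ : Matrix (Fin m) (Fin N) ℝ) (n : ℕ) :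
    ∃ Rec : (Fin m → ℝ) → Fin N → ℝ, ∀ u, Φ *ᵥ Rec (Φ *ᵥ u) = Φ *ᵥ u ∧
      IsMinOn (bestTermErr p n) {z | Φ *ᵥ z = Φ *ᵥ u} (Rec (Φ *ᵥ u)) := by
  have (y : Fin m → ℝ) : ∃ z, ∀ u, Φ *ᵥ u = y →
      Φ *ᵥ z = y ∧ IsMinOn (bestTermErr p n) {z | Φ *ᵥ z = y} z := by
    by_cases hy : ∃ u, Φ *ᵥ u = y
    · obtain ⟨u, rfl⟩ := hy
      obtain ⟨z, hz, hmin⟩ := exists_isMinOn_bestTermErr_fiber p hp Φ n u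
      exact ⟨z, fun _ _ => ⟨hz, hmin⟩⟩
    · exact ⟨0, fun u hu => (hy ⟨u, hu⟩).elim⟩
  choose Rec hRec using this
  exact ⟨Rec, fun u => hRec _ u rfl⟩

end Matrix

def IsInstanceOptimal {m N : ℕ} (normV : (Fin N → ℝ) → ℝ) (Φ : Matrix (Fin m) (Fin N) ℝ)
    (Rec : (Fin m → ℝ) → Fin N → ℝ) (n : ℕ) (C : ℝ) : Prop :=
  ∀ u, normV (u - Rec (Φ *ᵥ u)) ≤ C * bestTermErr normV n u

def HasNullSpaceProperty {m N : ℕ} (normV : (Fin N → ℝ) → ℝ) (Φ : Matrix (Fin m) (Fin N) ℝ)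
    (k : ℕ) (C : ℝ) : Prop :=
  ∀ v, Φ *ᵥ v = 0 → normV v ≤ C * bestTermErr normV k v

section Equivalence

variable {m N : ℕ} (p : Seminorm ℝ (Fin N → ℝ)) {Φ : Matrix (Fin m) (Fin N) ℝ} {n : ℕ} {C : ℝ}

theorem HasNullSpaceProperty.of_isInstanceOptimal {Rec : (Fin m → ℝ) → Fin N → ℝ} (hC : 0 < C)
    (h : IsInstanceOptimal p Φ Rec n C) : HasNullSpaceProperty p Φ (2 * n) C := by
  intro v hv
  refine le_mul_bestTermErr hC fun z hz => ?_
  obtain ⟨z₁, z₂, rfl, hz₁, hz₂⟩ :=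
    exists_add_eq_of_ncard_support_le_add z (hz.trans (two_mul n).le)
  have hrecover : p (-z₂ - Rec (Φ *ᵥ -z₂)) ≤ 0 := by
    have he : bestTermErr p n (-z₂) ≤ 0 := by
      simpa using bestTermErr_le p (u := -z₂) (v := -z₂) (by rwa [support_neg])
    exact (h (-z₂)).trans (mul_nonpos_of_nonneg_of_nonpos hC.le he)
  have hΦ : Φ *ᵥ (v - z₂) = Φ *ᵥ -z₂ := by
    rw [Matrix.mulVec_sub, hv, zero_sub, Matrix.mulVec_neg]
  calc p v = p ((v - z₂ - Rec (Φ *ᵥ (v - z₂))) - (-z₂ - Rec (Φ *ᵥ -z₂))) := by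
        rw [hΦ]; congr 1; abel
    _ ≤ p (v - z₂ - Rec (Φ *ᵥ (v - z₂))) + p (-z₂ - Rec (Φ *ᵥ -z₂)) := map_sub_le_add p _ _
    _ ≤ C * bestTermErr p n (v - z₂) + 0 := add_le_add (h _) hrecover
    _ ≤ C * p (v - z₂ - z₁) := by rw [add_zero]; gcongr; exact bestTermErr_le p hz₁
    _ = C * p (v - (z₁ + z₂)) := by rw [sub_sub, add_comm z₂]

theorem exists_isInstanceOptimal_of_hasNullSpaceProperty (hp : ∀ x, p x = 0 → x = 0)
    (hC : 0 ≤ C) (h : HasNullSpaceProperty p Φ (2 * n) C) :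
    ∃ Rec, IsInstanceOptimal p Φ Rec n (2 * C) := by
  obtain ⟨Rec, hRec⟩ := exists_decoder_isMinOn_bestTermErr p hp Φ n
  refine ⟨Rec, fun u => ?_⟩
  obtain ⟨hfiber, hmin⟩ := hRec u
  have hker : Φ *ᵥ (u - Rec (Φ *ᵥ u)) = 0 := by rw [Matrix.mulVec_sub, hfiber, sub_self]
  calc p (u - Rec (Φ *ᵥ u)) ≤ C * bestTermErr p (2 * n) (u - Rec (Φ *ᵥ u)) := h _ hker
    _ ≤ C * (bestTermErr p n u + bestTermErr p n (Rec (Φ *ᵥ u))) := by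
        gcongr; rw [two_mul]; exact bestTermErr_sub_le p _ _
    _ ≤ C * (bestTermErr p n u + bestTermErr p n u) := by gcongr; exact hmin rfl
    _ = 2 * C * bestTermErr p n u := by ring

end Equivalence

/-- **Cohen–Dahmen–DeVore equivalence of instance optimality and the null space
property** (Theorem 6.1): `IOP(n, C₀) ⟹ NSP(2n, C₀)` and `NSP(2n, C₁) ⟹ IOP(n, 2C₁)`. -/
theorem instance_optimality_iff_null_space_property
    {m N : ℕ} (Φ : Matrix (Fin m) (Fin N) ℝ) (n : ℕ)
    (normV : (Fin N → ℝ) → ℝ)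
    (hVadd : ∀ x y, normV (x + y) ≤ normV x + normV y)
    (hVsmul : ∀ (a : ℝ) x, normV (a • x) = |a| * normV x)
    (hVdef : ∀ x, normV x = 0 ↔ x = 0)
    (C₀ C₁ : ℝ) (hC₀ : 0 < C₀) (hC₁ : 0 < C₁) :
    ((∃ Rec : (Fin m → ℝ) → (Fin N → ℝ),
        ∀ u : Fin N → ℝ, normV (u - Rec (Φ.mulVec u)) ≤ C₀ * bestTermErr normV n u) →
      ∀ v : Fin N → ℝ, Φ.mulVec v = 0 → normV v ≤ C₀ * bestTermErr normV (2 * n) v) ∧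
    ((∀ v : Fin N → ℝ, Φ.mulVec v = 0 → normV v ≤ C₁ * bestTermErr normV (2 * n) v) →
      ∃ Rec : (Fin m → ℝ) → (Fin N → ℝ),
        ∀ u : Fin N → ℝ, normV (u - Rec (Φ.mulVec u)) ≤ 2 * C₁ * bestTermErr normV n u) := by
  let p : Seminorm ℝ (Fin N → ℝ) := Seminorm.of normV hVadd hVsmul
  exact ⟨fun ⟨_, hRec⟩ => HasNullSpaceProperty.of_isInstanceOptimal p hC₀ hRec,
    fun hNSP => exists_isInstanceOptimal_of_hasNullSpaceProperty p (fun x => (hVdef x).1)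
      hC₁.le hNSP⟩

end
end

section
/- Let Φ be an m×N matrix with null space property NSP(2n,C₁) in norm ‖·‖_V, and let ‖z‖_W = min{Φv = z, ‖v‖_V} be the quotient norm on ℝ^m. Then ‖Φu‖_W ≤ ‖u‖_V for all u (so α_W = 1), and ‖v‖_V ≤ (1+C₁)‖Φv‖_W for every 2n-sparse vector v (so IS(2n, 1+C₁) holds in the W-norm). -/
/-! If `ṽ` has the same measurement as the `2n`-sparse vector `v`, then `v - ṽ` lies in the
kernel of `Φ` and `v` is a `2n`-sparse approximation of it with error `‖ṽ‖_V`, so the null space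
property gives `‖v‖_V ≤ ‖ṽ‖_V + ‖v - ṽ‖_V ≤ (1 + C₁)‖ṽ‖_V`; taking the infimum over `ṽ` bounds
`‖v‖_V` by `(1 + C₁)‖Φv‖_W`. The other inequality holds because `u` itself competes in the
infimum defining `‖Φu‖_W`. -/

noncomputable section

/-- The quotient (Riesz) norm `‖z‖_W = min {‖v‖_V : Φv = z}` on `ℝ^m`. -/
def quotNorm {m N : ℕ} (Φ : Matrix (Fin m) (Fin N) ℝ) (normV : (Fin N → ℝ) → ℝ)
    (z : Fin m → ℝ) : ℝ :=
  sInf {r : ℝ | ∃ v : Fin N → ℝ, Φ.mulVec v = z ∧ r = normV v}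

section

variable {m N : ℕ} (Φ : Matrix (Fin m) (Fin N) ℝ) (p : Seminorm ℝ (Fin N → ℝ))

theorem quotNorm_mulVec_le (u : Fin N → ℝ) : quotNorm Φ p (Φ.mulVec u) ≤ p u :=
  csInf_le ⟨0, fun _ ⟨w, _, hr⟩ => hr ▸ apply_nonneg p w⟩ ⟨u, rfl, rfl⟩

theorem le_mul_quotNorm_mulVec {a c : ℝ} (hc : 0 < c) (v : Fin N → ℝ)
    (h : ∀ w, Φ.mulVec w = Φ.mulVec v → a ≤ c * p w) :
    a ≤ c * quotNorm Φ p (Φ.mulVec v) := by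
  rw [← div_le_iff₀' hc]
  exact le_csInf ⟨p v, v, rfl, rfl⟩ fun r ⟨w, hw, hr⟩ => by
    rw [div_le_iff₀' hc, hr]
    exact h w hw

theorem bestTermErr_le_of_ncard_le {k : ℕ} (u : Fin N → ℝ) {v : Fin N → ℝ}
    (hv : {i | v i ≠ 0}.ncard ≤ k) : bestTermErr p k u ≤ p (u - v) :=
  csInf_le ⟨0, fun _ ⟨w, _, hr⟩ => hr ▸ apply_nonneg p (u - w)⟩ ⟨v, hv, rfl⟩

theorem le_one_add_mul_of_mulVec_eq_of_nullSpaceProperty {k : ℕ} {C : ℝ} (hC : 0 ≤ C)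
    (hNSP : ∀ v, Φ.mulVec v = 0 → p v ≤ C * bestTermErr p k v)
    {v w : Fin N → ℝ} (hv : {i | v i ≠ 0}.ncard ≤ k) (hw : Φ.mulVec w = Φ.mulVec v) :
    p v ≤ (1 + C) * p w := by
  have hker : Φ.mulVec (v - w) = 0 := by rw [Matrix.mulVec_sub, hw, sub_self]
  have herr : bestTermErr p k (v - w) ≤ p w := by
    simpa using bestTermErr_le_of_ncard_le p (v - w) hv
  calc p v = p ((v - w) + w) := by rw [sub_add_cancel]
    _ ≤ p (v - w) + p w := map_add_le_add p _ _
    _ ≤ C * bestTermErr p k (v - w) + p w := by gcongr; exact hNSP _ hker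
    _ ≤ C * p w + p w := by gcongr
    _ = (1 + C) * p w := by ring

end

theorem null_space_property_implies_stability_general
    {m N : ℕ} (Φ : Matrix (Fin m) (Fin N) ℝ) (n : ℕ)
    (normV : (Fin N → ℝ) → ℝ)
    (hVadd : ∀ x y, normV (x + y) ≤ normV x + normV y)
    (hVsmul : ∀ (a : ℝ) x, normV (a • x) = |a| * normV x)
    (C₁ : ℝ) (hC₁ : 0 < C₁)
    (hNSP : ∀ v : Fin N → ℝ, Φ.mulVec v = 0 →
      normV v ≤ C₁ * bestTermErr normV (2 * n) v) :
    (∀ u : Fin N → ℝ, quotNorm Φ normV (Φ.mulVec u) ≤ normV u) ∧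
    (∀ v : Fin N → ℝ, {i | v i ≠ 0}.ncard ≤ 2 * n →
      normV v ≤ (1 + C₁) * quotNorm Φ normV (Φ.mulVec v)) := by
  let p : Seminorm ℝ (Fin N → ℝ) :=
    Seminorm.of normV hVadd fun a x => by rw [hVsmul, Real.norm_eq_abs]
  refine ⟨quotNorm_mulVec_le Φ p, fun v hv => ?_⟩
  exact le_mul_quotNorm_mulVec Φ p (by linarith) v fun w hw =>
    le_one_add_mul_of_mulVec_eq_of_nullSpaceProperty Φ p hC₁.le hNSP hv hw

/-- **The null space property implies stability and inverse stability in the quotient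
norm** (second half of Theorem 6.2): if `Φ` satisfies `NSP(2n, C₁)` then, with
`‖·‖_W` the quotient norm, `‖Φu‖_W ≤ ‖u‖_V` for all `u` (so `α_W = 1`), and
`‖v‖_V ≤ (1 + C₁)‖Φv‖_W` for every `2n`-sparse `v` (so `IS(2n, 1 + C₁)` holds). -/
theorem null_space_property_implies_stability
    {m N : ℕ} (Φ : Matrix (Fin m) (Fin N) ℝ) (n : ℕ)
    (normV : (Fin N → ℝ) → ℝ)
    (hVadd : ∀ x y, normV (x + y) ≤ normV x + normV y)
    (hVsmul : ∀ (a : ℝ) x, normV (a • x) = |a| * normV x)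
    (hVdef : ∀ x, normV x = 0 ↔ x = 0)
    (C₁ : ℝ) (hC₁ : 0 < C₁)
    (hNSP : ∀ v : Fin N → ℝ, Φ.mulVec v = 0 →
      normV v ≤ C₁ * bestTermErr normV (2 * n) v) :
    (∀ u : Fin N → ℝ, quotNorm Φ normV (Φ.mulVec u) ≤ normV u) ∧
    (∀ v : Fin N → ℝ, {i | v i ≠ 0}.ncard ≤ 2 * n →
      normV v ≤ (1 + C₁) * quotNorm Φ normV (Φ.mulVec v)) :=
  null_space_property_implies_stability_general Φ n normV hVadd hVsmul C₁ hC₁ hNSP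

end
end
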